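/- For a full-rank matrix G ∈ ℝ^{m×n} (m ≥ n), the column-equilibrated matrix G Σ_c with Σ_c = diag(‖G e₁‖₂⁻¹, …, ‖G e_n‖₂⁻¹) satisfies κ₂(G Σ_c) ≤ √n · min over all invertible diagonal Σ ∈ ℝ^{n×n} of κ₂(G Σ). -/

import Mathlib

open Matrix

noncomputable def enorm' {m : ℕ} (v : Fin m → ℝ) : ℝ := Real.sqrt (∑ i, v i ^ 2)

noncomputable def frob {m n : ℕ} (A : Matrix (Fin m) (Fin n) ℝ) : ℝ :=
  Real.sqrt (∑ i, ∑ j, A i j ^ 2)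

noncomputable def specNorm {m n : ℕ} (A : Matrix (Fin m) (Fin n) ℝ) : ℝ :=
  ‖(Matrix.toEuclideanLin A).toContinuousLinearMap‖

theorem Matrix.isHermitian_transpose_mul_self {m n α : Type*} [Fintype m] [CommSemiring α]
    [StarRing α] [TrivialStar α] (A : Matrix m n α) : (Aᵀ * A).IsHermitian := by
  rw [IsHermitian, conjTranspose_eq_transpose_of_trivial, transpose_mul, transpose_transpose]

noncomputable def sigmaMax (B : Matrix (Fin 2) (Fin 2) ℝ) : ℝ :=
  Real.sqrt (max ((Matrix.isHermitian_transpose_mul_self B).eigenvalues 0)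
                 ((Matrix.isHermitian_transpose_mul_self B).eigenvalues 1))

noncomputable def sigmaMin (B : Matrix (Fin 2) (Fin 2) ℝ) : ℝ :=
  Real.sqrt (min ((Matrix.isHermitian_transpose_mul_self B).eigenvalues 0)
                 ((Matrix.isHermitian_transpose_mul_self B).eigenvalues 1))

noncomputable def sigmaMaxR {m n : ℕ} (A : Matrix (Fin m) (Fin n) ℝ) : ℝ :=
  Real.sqrt (⨆ i, (Matrix.isHermitian_transpose_mul_self A).eigenvalues i)

noncomputable def sigmaMinR {m n : ℕ} (A : Matrix (Fin m) (Fin n) ℝ) : ℝ :=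
  Real.sqrt (⨅ i, (Matrix.isHermitian_transpose_mul_self A).eigenvalues i)

noncomputable def kappaR {m n : ℕ} (A : Matrix (Fin m) (Fin n) ℝ) : ℝ :=
  sigmaMaxR A / sigmaMinR A

/-! For `A = B * diagonal e`, where `B` has unit columns, pick `k` with `e k ^ 2` maximal.
Testing `A` on the `k`-th basis vector gives `σ_max(A)² ≥ e k ^ 2`, and testing it on
`(diagonal e)⁻¹ x`, where `x` is a unit minimiser of `‖B x‖`, gives
`σ_min(A)² ≤ e k ^ 2 σ_min(B)²`. Moreover `σ_max(B)² ≤ trace (Bᵀ B) = n`, so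
`κ(B)² ≤ n e k ^ 2 / σ_min(A)² ≤ n κ(A)²`. For the theorem, `B = G * diagonal c⁻¹` and
`e = c * Sig`, where `c` are the column norms of `G`. -/

namespace Matrix.IsHermitian

variable {n : Type*} [Fintype n] [DecidableEq n] {H : Matrix n n ℝ} (hH : H.IsHermitian)

theorem sum_eigenvectorBasis_dotProduct_mul (x y : n → ℝ) :
    ∑ i, (⇑(hH.eigenvectorBasis i) ⬝ᵥ x) * (⇑(hH.eigenvectorBasis i) ⬝ᵥ y) =
      x ⬝ᵥ y := by
  simpa [EuclideanSpace.inner_eq_star_dotProduct, dotProduct_comm] using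
    hH.eigenvectorBasis.sum_inner_mul_inner (WithLp.toLp 2 x) (WithLp.toLp 2 y)

theorem dotProduct_mulVec_eq_sum (x : n → ℝ) :
    x ⬝ᵥ H *ᵥ x = ∑ i, hH.eigenvalues i * (⇑(hH.eigenvectorBasis i) ⬝ᵥ x) ^ 2 := by
  rw [← hH.sum_eigenvectorBasis_dotProduct_mul]
  refine Finset.sum_congr rfl fun i _ => ?_
  have hsymm : Hᵀ = H := by simpa using hH.eq
  rw [dotProduct_mulVec, ← mulVec_transpose, hsymm, mulVec_eigenvectorBasis, smul_dotProduct,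
    smul_eq_mul]
  ring

theorem dotProduct_self_eq_sum (x : n → ℝ) :
    x ⬝ᵥ x = ∑ i, (⇑(hH.eigenvectorBasis i) ⬝ᵥ x) ^ 2 := by
  simp only [sq, hH.sum_eigenvectorBasis_dotProduct_mul]

theorem iInf_eigenvalues_mul_le (x : n → ℝ) :
    (⨅ i, hH.eigenvalues i) * (x ⬝ᵥ x) ≤ x ⬝ᵥ H *ᵥ x := by
  rw [hH.dotProduct_mulVec_eq_sum, hH.dotProduct_self_eq_sum, Finset.mul_sum]
  gcongr with i
  exact ciInf_le (Finite.bddBelow_range _) i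

theorem le_iSup_eigenvalues_mul (x : n → ℝ) :
    x ⬝ᵥ H *ᵥ x ≤ (⨆ i, hH.eigenvalues i) * (x ⬝ᵥ x) := by
  rw [hH.dotProduct_mulVec_eq_sum, hH.dotProduct_self_eq_sum, Finset.mul_sum]
  gcongr with i
  exact le_ciSup (Finite.bddAbove_range _) i

theorem exists_dotProduct_mulVec_eq_iInf [Nonempty n] :
    ∃ x : n → ℝ, x ⬝ᵥ x = 1 ∧ x ⬝ᵥ H *ᵥ x = ⨅ i, hH.eigenvalues i := by
  obtain ⟨i, hi⟩ := exists_eq_ciInf_of_finite (f := hH.eigenvalues)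
  refine ⟨hH.eigenvectorBasis i, ?_, ?_⟩
  · have h := real_inner_self_eq_norm_sq (hH.eigenvectorBasis i)
    rw [hH.eigenvectorBasis.orthonormal.1 i, EuclideanSpace.inner_eq_star_dotProduct] at h
    simpa using h
  · rw [← hi, hH.eigenvalues_eq i]
    simp

end Matrix.IsHermitian

namespace Matrix

theorem dotProduct_transpose_mul_self_mulVec {m n R : Type*} [Fintype m] [Fintype n]
    [CommSemiring R] (A : Matrix m n R) (x : n → R) :
    x ⬝ᵥ (Aᵀ * A) *ᵥ x = (A *ᵥ x) ⬝ᵥ (A *ᵥ x) := by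
  rw [← mulVec_mulVec, dotProduct_mulVec, vecMul_transpose, dotProduct_comm]

theorem rank_mul_diagonal {m n K : Type*} [Fintype n] [DecidableEq n] [Field K]
    (A : Matrix m n K) {e : n → K} (he : ∀ k, e k ≠ 0) : (A * diagonal e).rank = A.rank :=
  rank_mul_eq_left_of_isUnit_det _ A <| by
    simpa [det_diagonal] using Finset.prod_ne_zero_iff.mpr fun k _ => he k

variable {m n : Type*} [Fintype m] [Fintype n] [DecidableEq n]

-- `σ_max(A)²` and `σ_min(A)²`: `sigmaMaxR A` and `sigmaMinR A` are their square roots.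
noncomputable def maxGramEigenvalue (A : Matrix m n ℝ) : ℝ :=
  ⨆ i, (isHermitian_transpose_mul_self A).eigenvalues i

noncomputable def minGramEigenvalue (A : Matrix m n ℝ) : ℝ :=
  ⨅ i, (isHermitian_transpose_mul_self A).eigenvalues i

theorem mulVec_single_one_dotProduct_self {R : Type*} [CommSemiring R]
    (A : Matrix m n R) (k : n) : (A *ᵥ Pi.single k 1) ⬝ᵥ (A *ᵥ Pi.single k 1) = ∑ i, A i k ^ 2 := by
  simp [dotProduct, sq]

theorem sum_sq_mul_diagonal {R : Type*} [CommSemiring R] (A : Matrix m n R) (e : n → R)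
    (k : n) : ∑ i, (A * diagonal e) i k ^ 2 = e k ^ 2 * ∑ i, A i k ^ 2 := by
  simp only [mul_diagonal, Finset.mul_sum]
  exact Finset.sum_congr rfl fun i _ => by ring

theorem le_maxGramEigenvalue_mul (A : Matrix m n ℝ) (x : n → ℝ) :
    (A *ᵥ x) ⬝ᵥ (A *ᵥ x) ≤ maxGramEigenvalue A * (x ⬝ᵥ x) := by
  rw [← dotProduct_transpose_mul_self_mulVec]
  exact (isHermitian_transpose_mul_self A).le_iSup_eigenvalues_mul x

theorem minGramEigenvalue_mul_le (A : Matrix m n ℝ) (x : n → ℝ) :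
    minGramEigenvalue A * (x ⬝ᵥ x) ≤ (A *ᵥ x) ⬝ᵥ (A *ᵥ x) := by
  rw [← dotProduct_transpose_mul_self_mulVec]
  exact (isHermitian_transpose_mul_self A).iInf_eigenvalues_mul_le x

theorem exists_eq_minGramEigenvalue [Nonempty n] (A : Matrix m n ℝ) :
    ∃ x : n → ℝ, x ⬝ᵥ x = 1 ∧ (A *ᵥ x) ⬝ᵥ (A *ᵥ x) = minGramEigenvalue A := by
  simpa only [minGramEigenvalue, dotProduct_transpose_mul_self_mulVec] using
    (isHermitian_transpose_mul_self A).exists_dotProduct_mulVec_eq_iInf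

theorem gramEigenvalues_nonneg (A : Matrix m n ℝ) (i : n) :
    0 ≤ (isHermitian_transpose_mul_self A).eigenvalues i :=
  (posSemidef_conjTranspose_mul_self A).eigenvalues_nonneg i

theorem minGramEigenvalue_nonneg (A : Matrix m n ℝ) : 0 ≤ minGramEigenvalue A :=
  Real.iInf_nonneg (gramEigenvalues_nonneg A)

theorem minGramEigenvalue_pos [Nonempty n] {A : Matrix m n ℝ} (hA : A.rank = Fintype.card n) :
    0 < minGramEigenvalue A := by
  have hH := isHermitian_transpose_mul_self A
  obtain ⟨i, hi⟩ := exists_eq_ciInf_of_finite (f := hH.eigenvalues)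
  have hne : hH.eigenvalues i ≠ 0 := by
    by_contra h
    have hcard := Fintype.card_subtype_lt (p := fun j => hH.eigenvalues j ≠ 0) (not_not.mpr h)
    rw [← hH.rank_eq_card_non_zero_eigs, rank_transpose_mul_self, hA] at hcard
    exact lt_irrefl _ hcard
  rw [minGramEigenvalue, ← hi]
  exact (gramEigenvalues_nonneg A i).lt_of_ne' hne

theorem maxGramEigenvalue_le_sum_sq (A : Matrix m n ℝ) :
    maxGramEigenvalue A ≤ ∑ k, ∑ i, A i k ^ 2 := by
  have hH := isHermitian_transpose_mul_self A
  have htrace : ∑ j, hH.eigenvalues j = ∑ k, ∑ i, A i k ^ 2 := by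
    have := hH.trace_eq_sum_eigenvalues
    simp only [RCLike.ofReal_real_eq_id, id] at this
    rw [← this, trace, Finset.sum_congr rfl fun k _ => ?_]
    simp [mul_apply, sq]
  have hnonneg := gramEigenvalues_nonneg A
  rw [← htrace]
  exact Real.iSup_le (fun i => Finset.single_le_sum (fun j _ => hnonneg j) (Finset.mem_univ i))
    (Finset.sum_nonneg fun j _ => hnonneg j)

theorem sum_sq_le_maxGramEigenvalue (A : Matrix m n ℝ) (k : n) :
    ∑ i, A i k ^ 2 ≤ maxGramEigenvalue A := by
  have h := le_maxGramEigenvalue_mul A (Pi.single k 1)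
  rwa [mulVec_single_one_dotProduct_self, single_dotProduct, Pi.single_eq_same, one_mul,
    mul_one] at h

theorem sum_sq_pos_of_rank_eq {A : Matrix m n ℝ} (hA : A.rank = Fintype.card n) (k : n) :
    0 < ∑ i, A i k ^ 2 := by
  have : Nonempty n := ⟨k⟩
  have h := minGramEigenvalue_mul_le A (Pi.single k 1)
  rw [mulVec_single_one_dotProduct_self, single_dotProduct, Pi.single_eq_same, one_mul,
    mul_one] at h
  exact (minGramEigenvalue_pos hA).trans_le h

theorem minGramEigenvalue_mul_diagonal_le [Nonempty n] (B : Matrix m n ℝ) {e : n → ℝ}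
    (he : ∀ k, e k ≠ 0) {M : ℝ} (hM : ∀ k, e k ^ 2 ≤ M) :
    minGramEigenvalue (B * diagonal e) ≤ M * minGramEigenvalue B := by
  obtain ⟨x, hx, hBx⟩ := exists_eq_minGramEigenvalue B
  set y : n → ℝ := fun k => (e k)⁻¹ * x k
  have hy : diagonal e *ᵥ y = x := by
    ext k
    simp [y, mulVec_diagonal, mul_inv_cancel_left₀ (he k)]
  have hxy : 1 ≤ M * (y ⬝ᵥ y) := by
    rw [← hx, ← hy]
    simp only [mulVec_diagonal, dotProduct, Finset.mul_sum]
    refine Finset.sum_le_sum fun k _ => ?_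
    nlinarith [hM k, mul_self_nonneg (y k)]
  have hAy := minGramEigenvalue_mul_le (B * diagonal e) y
  rw [← mulVec_mulVec, hy, hBx] at hAy
  have hM0 : 0 ≤ M := (sq_nonneg _).trans (hM (Classical.arbitrary n))
  nlinarith [mul_le_mul_of_nonneg_left hxy (minGramEigenvalue_nonneg (B * diagonal e)),
    mul_le_mul_of_nonneg_left hAy hM0]

end Matrix

theorem kappaR_le_sqrt_mul_kappaR_mul_diagonal {m n : ℕ} (hn : 0 < n)
    (B : Matrix (Fin m) (Fin n) ℝ) (hB : B.rank = n) (hcol : ∀ k, ∑ i, B i k ^ 2 = 1)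
    {e : Fin n → ℝ} (he : ∀ k, e k ≠ 0) :
    kappaR B ≤ Real.sqrt n * kappaR (B * diagonal e) := by
  have : Nonempty (Fin n) := ⟨⟨0, hn⟩⟩
  obtain ⟨k, hk⟩ := Finite.exists_max fun k => e k ^ 2
  set A := B * diagonal e
  have hmaxB : maxGramEigenvalue B ≤ n := by
    simpa [hcol] using maxGramEigenvalue_le_sum_sq B
  have hminA : 0 < minGramEigenvalue A :=
    minGramEigenvalue_pos (by rw [rank_mul_diagonal B he, hB, Fintype.card_fin])
  have hminB : minGramEigenvalue A ≤ e k ^ 2 * minGramEigenvalue B :=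
    minGramEigenvalue_mul_diagonal_le B he hk
  have hmaxA : e k ^ 2 ≤ maxGramEigenvalue A := by
    have h := sum_sq_le_maxGramEigenvalue A k
    rwa [sum_sq_mul_diagonal, hcol, mul_one] at h
  have hek : 0 < e k ^ 2 := by have := he k; positivity
  have key : maxGramEigenvalue B / minGramEigenvalue B ≤
      n * (maxGramEigenvalue A / minGramEigenvalue A) := by
    have hminB' : 0 < minGramEigenvalue B := pos_of_mul_pos_right (hminA.trans_le hminB) hek.le
    calc maxGramEigenvalue B / minGramEigenvalue B ≤ n / minGramEigenvalue B := by gcongr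
      _ = n * e k ^ 2 / (e k ^ 2 * minGramEigenvalue B) := by field_simp [he k]
      _ ≤ n * e k ^ 2 / minGramEigenvalue A := by gcongr
      _ ≤ n * maxGramEigenvalue A / minGramEigenvalue A := by gcongr
      _ = n * (maxGramEigenvalue A / minGramEigenvalue A) := mul_div_assoc _ _ _
  calc kappaR B = √(maxGramEigenvalue B / minGramEigenvalue B) :=
        (Real.sqrt_div' _ (minGramEigenvalue_nonneg B)).symm
    _ ≤ √(n * (maxGramEigenvalue A / minGramEigenvalue A)) := Real.sqrt_le_sqrt key
    _ = √n * kappaR A := by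
        rw [Real.sqrt_mul (Nat.cast_nonneg n), Real.sqrt_div' _ hminA.le]
        rfl

theorem van_der_sluis_column_scaling_general {m n : ℕ} (hn : 0 < n)
    (G : Matrix (Fin m) (Fin n) ℝ) (hrank : G.rank = n) :
    ∀ Sig : Fin n → ℝ, (∀ k, Sig k ≠ 0) →
      kappaR (G * Matrix.diagonal (fun k => (enorm' (fun i => G i k))⁻¹)) ≤
        Real.sqrt n * kappaR (G * Matrix.diagonal Sig) := by
  intro Sig hSig
  set c : Fin n → ℝ := fun k => enorm' fun i => G i k
  have hcol : ∀ k, 0 < ∑ i, G i k ^ 2 :=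
    sum_sq_pos_of_rank_eq (by rw [hrank, Fintype.card_fin])
  have hc : ∀ k, c k ^ 2 = ∑ i, G i k ^ 2 := fun k => Real.sq_sqrt (hcol k).le
  have hc0 : ∀ k, c k ≠ 0 := fun k => (Real.sqrt_pos.mpr (hcol k)).ne'
  set B := G * diagonal fun k => (c k)⁻¹
  have hB : B.rank = n := by rw [rank_mul_diagonal G fun k => inv_ne_zero (hc0 k), hrank]
  have hBcol : ∀ k, ∑ i, B i k ^ 2 = 1 := fun k => by
    rw [sum_sq_mul_diagonal, ← hc, inv_pow, inv_mul_cancel₀ (pow_ne_zero 2 (hc0 k))]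
  have hGSig : G * diagonal Sig = B * diagonal fun k => c k * Sig k := by
    rw [Matrix.mul_assoc, diagonal_mul_diagonal]
    simp only [inv_mul_cancel_left₀ (hc0 _)]
  rw [hGSig]
  exact kappaR_le_sqrt_mul_kappaR_mul_diagonal hn B hB hBcol fun k =>
    mul_ne_zero (hc0 k) (hSig k)

theorem van_der_sluis_column_scaling {m n : ℕ} (hn : 0 < n) (hmn : n ≤ m)
    (G : Matrix (Fin m) (Fin n) ℝ) (hrank : G.rank = n) :
    ∀ Sig : Fin n → ℝ, (∀ k, Sig k ≠ 0) →
      kappaR (G * Matrix.diagonal (fun k => (enorm' (fun i => G i k))⁻¹)) ≤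
        Real.sqrt n * kappaR (G * Matrix.diagonal Sig) :=
  van_der_sluis_column_scaling_general hn G hrank
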